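/- Let ψ_a and ψ_b be probability measures on a measurable space (E,ℬ) with ψ_a absolutely continuous with respect to ψ_b and g = dψ_a/dψ_b ∈ L²(ψ_b). Then sup{ ∫ f dψ_a − ½ ∫ f² dψ_b : f ∈ L²(ψ_b), ∫ f dψ_b = 0, ∫ |f| dψ_a < ∞ } = ½ ∫ (g − 1)² dψ_b; i.e., the quadratic variational expression equals D̂(ψ_a‖ψ_b). -/

import Mathlib

/-!
Write `g = dψa/dψb`. For `ψb(f) = 0` we have `ψa(f) = ψb(g f) = ψb((g - 1) f)`, and pointwise
`(g - 1) f - f²/2 ≤ (g - 1)²/2`, with equality at `f = g - 1`. That function is admissible,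
being centred because `ψb(g) = ψa(E) = 1`, so it attains the supremum.
-/

open MeasureTheory

namespace MeasureTheory

variable {α : Type*} [MeasurableSpace α] {μ ν : Measure α}

lemma integral_mul_sub_half_integral_sq_le {f h : α → ℝ} (hf : MemLp f 2 μ) (hh : MemLp h 2 μ) :
    ∫ x, h x * f x ∂μ - 1 / 2 * ∫ x, f x ^ 2 ∂μ ≤ 1 / 2 * ∫ x, h x ^ 2 ∂μ := by
  have hhf : Integrable (fun x => h x * f x) μ := hh.integrable_mul hf
  rw [← integral_const_mul, ← integral_const_mul,
    ← integral_sub hhf (hf.integrable_sq.const_mul _)]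
  exact integral_mono (hhf.sub (hf.integrable_sq.const_mul _)) (hh.integrable_sq.const_mul _)
    fun x => by nlinarith [sq_nonneg (f x - h x)]

lemma integral_toReal_rnDeriv_sub_one [IsProbabilityMeasure μ] [IsProbabilityMeasure ν]
    (hμν : μ ≪ ν) : ∫ x, ((μ.rnDeriv ν x).toReal - 1) ∂ν = 0 := by
  rw [integral_sub Measure.integrable_toReal_rnDeriv (integrable_const 1),
    Measure.integral_toReal_rnDeriv hμν]
  simp

variable [SigmaFinite μ] [IsFiniteMeasure ν]

lemma integrable_toReal_rnDeriv_sub_one (hμν : μ ≪ ν)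
    (hg : MemLp (fun x => (μ.rnDeriv ν x).toReal) 2 ν) :
    Integrable (fun x => (μ.rnDeriv ν x).toReal - 1) μ := by
  rw [← integrable_toReal_rnDeriv_mul_iff hμν]
  exact hg.integrable_mul (hg.sub (memLp_const 1))

lemma integral_eq_integral_toReal_rnDeriv_sub_one_mul (hμν : μ ≪ ν)
    (hg : MemLp (fun x => (μ.rnDeriv ν x).toReal) 2 ν) {f : α → ℝ} (hf : MemLp f 2 ν)
    (hf₀ : ∫ x, f x ∂ν = 0) :
    ∫ x, f x ∂μ = ∫ x, ((μ.rnDeriv ν x).toReal - 1) * f x ∂ν := by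
  have hgf : Integrable (fun x => (μ.rnDeriv ν x).toReal * f x) ν := hg.integrable_mul hf
  simp_rw [sub_mul, one_mul]
  rw [integral_sub hgf (hf.integrable one_le_two), hf₀, sub_zero,
    integral_toReal_rnDeriv_mul hμν]

end MeasureTheory

/-- The quadratic variational formula: for `g = dψ_a/dψ_b ∈ L²(ψ_b)`,
`sup { ψ_a(f) − ½ ψ_b(f²) : ψ_b(f) = 0 } = ½ ψ_b((g−1)²) = D̂(ψ_a‖ψ_b)`. -/
theorem stmt12 {E : Type*} [MeasurableSpace E] (ψa ψb : Measure E)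
    [IsProbabilityMeasure ψa] [IsProbabilityMeasure ψb]
    (hac : ψa ≪ ψb)
    (g : E → ℝ) (hg : g = fun x => (ψa.rnDeriv ψb x).toReal)
    (hgL2 : MemLp g 2 ψb) :
    sSup {r : ℝ | ∃ f : E → ℝ, Measurable f ∧ MemLp f 2 ψb ∧
        (∫ x, f x ∂ψb = 0) ∧ Integrable f ψa ∧
        r = (∫ x, f x ∂ψa) - (1 / 2 : ℝ) * ∫ x, (f x) ^ 2 ∂ψb}
      = (1 / 2 : ℝ) * ∫ x, (g x - 1) ^ 2 ∂ψb := by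
  subst hg
  beta_reduce
  set h : E → ℝ := fun x => (ψa.rnDeriv ψb x).toReal - 1
  have hh : MemLp h 2 ψb := hgL2.sub (memLp_const 1)
  have hh₀ : ∫ x, h x ∂ψb = 0 := integral_toReal_rnDeriv_sub_one hac
  have hψa : ∀ f, MemLp f 2 ψb → ∫ x, f x ∂ψb = 0 → ∫ x, f x ∂ψa = ∫ x, h x * f x ∂ψb :=
    fun _ ↦ integral_eq_integral_toReal_rnDeriv_sub_one_mul hac hgL2
  refine IsGreatest.csSup_eq ⟨⟨h, (Measure.measurable_rnDeriv _ _).ennreal_toReal.sub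
    measurable_const, hh, hh₀, integrable_toReal_rnDeriv_sub_one hac hgL2, ?_⟩, ?_⟩
  · rw [hψa h hh hh₀]
    simp_rw [← sq]
    ring
  · rintro r ⟨f, -, hf, hf₀, -, rfl⟩
    rw [hψa f hf hf₀]
    exact integral_mul_sub_half_integral_sq_le hf hh
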